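/- arXiv:2603.09409 — 3 statements merged into one kernel-verified Lean document; each statement's English description precedes it below -/
import Mathlib

section
/- Fix x ∈ (0,1), m ≥ 1, and let W be the m×m matrix with entries W[i][j] = x^{2j(m−i)} for 1 ≤ i ≤ m, 0 ≤ j ≤ m−1. For k ∈ {1,...,m}, let w_{k,1} be the determinant of the matrix obtained from W by deleting the k-th row and the first column. Then w_{k,1} · ∏_{i=1}^{k−1}(1 − x^{2(k−i)}) · ∏_{j=k+1}^{m}(1 − x^{2(j−k)}) = x^{k²−k} · det W. -/
/-!
The matrix is the Vandermonde matrix of the nodes `v i = x ^ (2 * (m - i))`. Deleting row `k`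
and the column of ones leaves `diag (v i)_{i ≠ k}` times the Vandermonde matrix of the other
nodes, and `det W` is that smaller Vandermonde determinant times
`∏_{i < k} (v k - v i) * ∏_{j > k} (v j - v k)`. For these geometric nodes
`v k - v i = v k * (1 - x ^ (2 * (k - i)))` and `v j - v k = v j * (1 - x ^ (2 * (j - k)))`,
while `∏_{i < k} v i = x ^ (k ^ 2 + k) * v k ^ k` (with `k` counted from `0`), so both sides
agree factor by factor.
-/

open Finset

namespace Fin

variable {M : Type*} [CommMonoid M]

theorem prod_succAbove_eq_prod_Iio_mul_prod_Ioi {n : ℕ} (k : Fin (n + 1))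
    (f : Fin (n + 1) → M) :
    ∏ i : Fin n, f (k.succAbove i) = (∏ i ∈ Iio k, f i) * ∏ i ∈ Ioi k, f i := by
  simp only [← filter_gt_eq_Iio, ← filter_lt_eq_Ioi, prod_filter, prod_univ_succAbove _ k,
    lt_irrefl, if_false, one_mul, ← prod_mul_distrib]
  refine prod_congr rfl fun i _ => ?_
  rcases (succAbove_ne k i).lt_or_gt with h | h <;> simp [h, h.not_gt]

theorem prod_prod_Ioi_eq_succAbove_mul {n : ℕ} (k : Fin (n + 1))
    (g : Fin (n + 1) → Fin (n + 1) → M) :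
    ∏ i, ∏ j ∈ Ioi i, g i j =
      (∏ i : Fin n, ∏ j ∈ Ioi i, g (k.succAbove i) (k.succAbove j)) *
        ((∏ i ∈ Iio k, g i k) * ∏ j ∈ Ioi k, g k j) := by
  simp only [← filter_lt_eq_Ioi, ← filter_gt_eq_Iio, prod_filter, prod_univ_succAbove _ k,
    lt_irrefl, if_false, one_mul, succAbove_lt_succAbove_iff, prod_mul_distrib]
  ac_rfl

theorem prod_Iio_tsub {n : ℕ} (k : Fin n) (f : ℕ → M) :
    ∏ i ∈ Iio k, f (k - i) = ∏ l ∈ Icc 1 (k : ℕ), f l := by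
  refine (prod_map (Iio k) valEmbedding (fun i => f (k - i))).symm.trans ?_
  rw [map_valEmbedding_Iio]
  refine prod_nbij' (k - ·) (k - ·) ?_ ?_ ?_ ?_ (fun _ _ => rfl) <;>
    simp only [mem_Iio, mem_Icc] <;> omega

theorem prod_Ioi_tsub {m : ℕ} (k : Fin (m + 1)) (f : ℕ → M) :
    ∏ j ∈ Ioi k, f (j - k) = ∏ l ∈ Icc 1 (m - (k : ℕ)), f l := by
  refine (prod_map (Ioi k) valEmbedding (fun j => f (j - k))).symm.trans ?_
  rw [map_valEmbedding_Ioi]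
  refine prod_nbij' (· - k) (· + k) ?_ ?_ ?_ ?_ (fun _ _ => rfl) <;>
    simp only [mem_Ioo, mem_Icc] <;> omega

end Fin

namespace Matrix

variable {R : Type*} [CommRing R] {n : ℕ}

theorem det_vandermonde_submatrix_succ (v : Fin (n + 1) → R) (f : Fin n → Fin (n + 1)) :
    det ((vandermonde v).submatrix f Fin.succ) =
      (∏ i, v (f i)) * det (vandermonde (v ∘ f)) := by
  rw [← det_mul_column]
  congr 1
  ext i j
  simp [vandermonde_apply, pow_succ']

theorem det_vandermonde_eq_det_vandermonde_succAbove_mul (v : Fin (n + 1) → R)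
    (k : Fin (n + 1)) :
    det (vandermonde v) = det (vandermonde (v ∘ k.succAbove)) *
      ((∏ i ∈ Iio k, (v k - v i)) * ∏ j ∈ Ioi k, (v j - v k)) := by
  rw [det_vandermonde, det_vandermonde, Fin.prod_prod_Ioi_eq_succAbove_mul k]
  rfl

end Matrix

theorem prod_Icc_pow_two_mul {M : Type*} [CommMonoid M] (x : M) (K : ℕ) :
    ∏ l ∈ Icc 1 K, x ^ (2 * l) = x ^ (K ^ 2 + K) := by
  induction K with
  | zero => simp
  | succ K ih => rw [prod_Icc_succ_top (by omega), ih, ← pow_add]; ring_nf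

section GeometricNodes

variable {m : ℕ} (k : Fin (m + 1))

theorem prod_Iio_pow_two_mul_tsub {M : Type*} [CommMonoid M] (x : M) :
    ∏ i ∈ Iio k, x ^ (2 * (m - (i : ℕ))) =
      x ^ ((k : ℕ) ^ 2 + (k : ℕ)) * (x ^ (2 * (m - (k : ℕ)))) ^ (k : ℕ) := by
  have h : ∀ i ∈ Iio k,
      x ^ (2 * (m - (i : ℕ))) = x ^ (2 * (m - (k : ℕ))) * x ^ (2 * ((k : ℕ) - i)) := by
    intro i hi
    rw [mem_Iio] at hi
    rw [← pow_add]
    congr 1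
    omega
  rw [prod_congr rfl h, prod_mul_distrib, prod_const, Fin.card_Iio,
    Fin.prod_Iio_tsub k (fun l => x ^ (2 * l)), prod_Icc_pow_two_mul, mul_comm]

variable {R : Type*} [CommRing R] (x : R)

theorem prod_Iio_sub_pow_two_mul_tsub :
    ∏ i ∈ Iio k, (x ^ (2 * (m - (k : ℕ))) - x ^ (2 * (m - (i : ℕ)))) =
      (x ^ (2 * (m - (k : ℕ)))) ^ (k : ℕ) * ∏ l ∈ Icc 1 (k : ℕ), (1 - x ^ (2 * l)) := by
  have h : ∀ i ∈ Iio k, x ^ (2 * (m - (k : ℕ))) - x ^ (2 * (m - (i : ℕ))) =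
      x ^ (2 * (m - (k : ℕ))) * (1 - x ^ (2 * ((k : ℕ) - i))) := by
    intro i hi
    rw [mem_Iio] at hi
    rw [mul_sub, mul_one, ← pow_add]
    congr 2
    omega
  rw [prod_congr rfl h, prod_mul_distrib, prod_const, Fin.card_Iio,
    Fin.prod_Iio_tsub k (fun l => 1 - x ^ (2 * l))]

theorem prod_Ioi_sub_pow_two_mul_tsub :
    ∏ j ∈ Ioi k, (x ^ (2 * (m - (j : ℕ))) - x ^ (2 * (m - (k : ℕ)))) =
      (∏ j ∈ Ioi k, x ^ (2 * (m - (j : ℕ)))) *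
        ∏ l ∈ Icc 1 (m - (k : ℕ)), (1 - x ^ (2 * l)) := by
  have h : ∀ j ∈ Ioi k, x ^ (2 * (m - (j : ℕ))) - x ^ (2 * (m - (k : ℕ))) =
      x ^ (2 * (m - (j : ℕ))) * (1 - x ^ (2 * ((j : ℕ) - k))) := by
    intro j hj
    rw [mem_Ioi] at hj
    have hjm := j.isLt
    rw [mul_sub, mul_one, ← pow_add]
    congr 2
    omega
  rw [prod_congr rfl h, prod_mul_distrib, Fin.prod_Ioi_tsub k (fun l => 1 - x ^ (2 * l))]

end GeometricNodes

theorem vandermonde_geometric_minor_general (m : ℕ) (x : ℝ)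
    (k : Fin (m + 1)) :
    Matrix.det
        ((Matrix.of fun (i j : Fin (m + 1)) => x ^ (2 * (j : ℕ) * (m - (i : ℕ)))).submatrix
          k.succAbove Fin.succ) *
        ((∏ l ∈ Finset.Icc 1 (k : ℕ), (1 - x ^ (2 * l))) *
          ∏ l ∈ Finset.Icc 1 (m - (k : ℕ)), (1 - x ^ (2 * l))) =
      x ^ ((k : ℕ) ^ 2 + (k : ℕ)) *
        Matrix.det (Matrix.of fun (i j : Fin (m + 1)) => x ^ (2 * (j : ℕ) * (m - (i : ℕ)))) := by
  have hW : (Matrix.of fun (i j : Fin (m + 1)) => x ^ (2 * (j : ℕ) * (m - (i : ℕ)))) =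
      Matrix.vandermonde fun i => x ^ (2 * (m - (i : ℕ))) := by
    ext i j
    rw [Matrix.of_apply, Matrix.vandermonde_apply, ← pow_mul]
    ring_nf
  rw [hW, Matrix.det_vandermonde_submatrix_succ,
    Fin.prod_succAbove_eq_prod_Iio_mul_prod_Ioi k (fun i => x ^ (2 * (m - (i : ℕ)))),
    Matrix.det_vandermonde_eq_det_vandermonde_succAbove_mul _ k]
  simp only [prod_Iio_pow_two_mul_tsub, prod_Iio_sub_pow_two_mul_tsub,
    prod_Ioi_sub_pow_two_mul_tsub]
  ring

/-- Size of the matrix is `m + 1`, i.e. the paper's `m` is `m + 1 ≥ 1` here.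
The paper's 1-based row index `k` corresponds to `(k : ℕ) + 1` for `k : Fin (m+1)`,
so `k² - k` (paper) becomes `(k : ℕ)^2 + (k : ℕ)`. -/
theorem vandermonde_geometric_minor (m : ℕ) (x : ℝ) (hx : x ∈ Set.Ioo (0 : ℝ) 1)
    (k : Fin (m + 1)) :
    Matrix.det
        ((Matrix.of fun (i j : Fin (m + 1)) => x ^ (2 * (j : ℕ) * (m - (i : ℕ)))).submatrix
          k.succAbove Fin.succ) *
        ((∏ l ∈ Finset.Icc 1 (k : ℕ), (1 - x ^ (2 * l))) *
          ∏ l ∈ Finset.Icc 1 (m - (k : ℕ)), (1 - x ^ (2 * l))) =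
      x ^ ((k : ℕ) ^ 2 + (k : ℕ)) *
        Matrix.det (Matrix.of fun (i j : Fin (m + 1)) => x ^ (2 * (j : ℕ) * (m - (i : ℕ)))) :=
  vandermonde_geometric_minor_general m x k
end

section
/- Let z ∈ ℝⁿ with z ≠ 0, λ₁,...,λ_{m−1} ∈ ℝ, and define h(x) = (z·x) ∏_{k=1}^{m−1} [ (λ_k² − |z|²)|x−z|² − 4|z|²(z·x) ]. Then for every x ≠ z, the Kelvin-type transform satisfies |x−z|^{2m−n} · h( 2|z|² (x−z)/|x−z|² + z ) = 4^{m−1} |z|^{4m−2} · (|x|² − |z|²)/|x−z|ⁿ · ∏_{k=1}^{m−1} (λ_k² − |x|²). -/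
open Finset
open scoped RealInnerProductSpace

/-!
The map `x ↦ y = (2‖z‖² / ‖x - z‖²) • (x - z) + z` is the inversion in the sphere of centre `z`
and radius `√2 ‖z‖`. Expanding `‖x - z‖²` gives `2⟪z, x⟫ - 2‖z‖² + ‖x - z‖² = ‖x‖² - ‖z‖²`, whence
`⟪z, y⟫ = ‖z‖² (‖x‖² - ‖z‖²) / ‖x - z‖²`, while `‖y - z‖² = 4‖z‖⁴ / ‖x - z‖²`. Hence every factor
of `h y` becomes `4‖z‖⁴ / ‖x - z‖² · (λ² - ‖x‖²)`, and the powers of `‖x - z‖` cancel.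
-/

section KelvinInversion

variable {E : Type*} [NormedAddCommGroup E] [InnerProductSpace ℝ E]

theorem two_mul_inner_sub_add_norm_sub_sq (z x : E) :
    2 * ⟪z, x⟫ - 2 * ‖z‖ ^ 2 + ‖x - z‖ ^ 2 = ‖x‖ ^ 2 - ‖z‖ ^ 2 := by
  rw [norm_sub_sq_real, real_inner_comm]
  ring

theorem inner_kelvin_inversion {z x : E} (hx : x ≠ z) :
    ⟪z, (2 * ‖z‖ ^ 2 / ‖x - z‖ ^ 2) • (x - z) + z⟫ =
      ‖z‖ ^ 2 * (‖x‖ ^ 2 - ‖z‖ ^ 2) / ‖x - z‖ ^ 2 := by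
  have hxz : ‖x - z‖ ≠ 0 := norm_ne_zero_iff.mpr (sub_ne_zero.mpr hx)
  rw [inner_add_right, real_inner_smul_right, inner_sub_right, real_inner_self_eq_norm_sq,
    ← two_mul_inner_sub_add_norm_sub_sq z x]
  field_simp

theorem norm_kelvin_inversion_sub_sq {z x : E} (hx : x ≠ z) :
    ‖(2 * ‖z‖ ^ 2 / ‖x - z‖ ^ 2) • (x - z) + z - z‖ ^ 2 = 4 * ‖z‖ ^ 4 / ‖x - z‖ ^ 2 := by
  have hxz : ‖x - z‖ ≠ 0 := norm_ne_zero_iff.mpr (sub_ne_zero.mpr hx)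
  rw [add_sub_cancel_right, norm_smul, mul_pow, Real.norm_eq_abs, sq_abs]
  field_simp
  ring

theorem kelvin_inversion_factor {z x : E} (hx : x ≠ z) (μ : ℝ) :
    (μ - ‖z‖ ^ 2) * ‖(2 * ‖z‖ ^ 2 / ‖x - z‖ ^ 2) • (x - z) + z - z‖ ^ 2 -
        4 * ‖z‖ ^ 2 * ⟪z, (2 * ‖z‖ ^ 2 / ‖x - z‖ ^ 2) • (x - z) + z⟫ =
      4 * ‖z‖ ^ 4 / ‖x - z‖ ^ 2 * (μ - ‖x‖ ^ 2) := by
  rw [norm_kelvin_inversion_sub_sq hx, inner_kelvin_inversion hx]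
  ring

end KelvinInversion

theorem kelvin_transform_identity_general (n : ℕ) (m : ℕ) (hm : 2 ≤ m)
    (z : EuclideanSpace ℝ (Fin n)) (lam : ℕ → ℝ)
    (h : EuclideanSpace ℝ (Fin n) → ℝ)
    (hh : ∀ x, h x = ⟪z, x⟫ *
      ∏ k ∈ Finset.Icc 1 (m - 1),
        ((lam k ^ 2 - ‖z‖ ^ 2) * ‖x - z‖ ^ 2 - 4 * ‖z‖ ^ 2 * ⟪z, x⟫))
    (x : EuclideanSpace ℝ (Fin n)) (hx : x ≠ z) :
    ‖x - z‖ ^ (2 * (m : ℝ) - (n : ℝ)) *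
        h ((2 * ‖z‖ ^ 2 / ‖x - z‖ ^ 2) • (x - z) + z) =
      4 ^ (m - 1) * ‖z‖ ^ (4 * m - 2) * ((‖x‖ ^ 2 - ‖z‖ ^ 2) / ‖x - z‖ ^ n) *
        ∏ k ∈ Finset.Icc 1 (m - 1), (lam k ^ 2 - ‖x‖ ^ 2) := by
  have hxz : ‖x - z‖ ≠ 0 := norm_ne_zero_iff.mpr (sub_ne_zero.mpr hx)
  have hpow : ‖x - z‖ ^ (2 * (m : ℝ) - (n : ℝ)) = ‖x - z‖ ^ (2 * m) / ‖x - z‖ ^ n := by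
    rw [Real.rpow_sub_natCast hxz]
    norm_cast
  rw [hh, prod_congr rfl fun k _ => kelvin_inversion_factor hx _, inner_kelvin_inversion hx,
    prod_mul_distrib, prod_const, Nat.card_Icc, hpow]
  obtain ⟨p, rfl⟩ : ∃ p, m = p + 1 := ⟨m - 1, by omega⟩
  rw [show p + 1 - 1 + 1 - 1 = p by omega, show p + 1 - 1 = p by omega,
    show 4 * (p + 1) - 2 = 4 * p + 2 by omega, div_pow]
  field_simp
  ring

/-- Kelvin-type transform identity: here `‖x - z‖ ^ (2m - n)` is interpreted via the real
power `rpow` since `2m - n` may be negative. -/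
theorem kelvin_transform_identity (n : ℕ) (hn : 1 ≤ n) (m : ℕ) (hm : 2 ≤ m)
    (z : EuclideanSpace ℝ (Fin n)) (hz : z ≠ 0) (lam : ℕ → ℝ)
    (h : EuclideanSpace ℝ (Fin n) → ℝ)
    (hh : ∀ x, h x = ⟪z, x⟫ *
      ∏ k ∈ Finset.Icc 1 (m - 1),
        ((lam k ^ 2 - ‖z‖ ^ 2) * ‖x - z‖ ^ 2 - 4 * ‖z‖ ^ 2 * ⟪z, x⟫))
    (x : EuclideanSpace ℝ (Fin n)) (hx : x ≠ z) :
    ‖x - z‖ ^ (2 * (m : ℝ) - (n : ℝ)) *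
        h ((2 * ‖z‖ ^ 2 / ‖x - z‖ ^ 2) • (x - z) + z) =
      4 ^ (m - 1) * ‖z‖ ^ (4 * m - 2) * ((‖x‖ ^ 2 - ‖z‖ ^ 2) / ‖x - z‖ ^ n) *
        ∏ k ∈ Finset.Icc 1 (m - 1), (lam k ^ 2 - ‖x‖ ^ 2) :=
  kelvin_transform_identity_general n m hm z lam h hh x hx
end

section
/- Let Ω ⊆ ℝⁿ be open and bounded, x₀ ∈ Ω with r := dist(x₀, ∂Ω) > 0, and suppose 2r ≤ diam(Ω). Set α_k = (r/(2 diam Ω))^{m−k} for k = 1,...,m−1. Then with c_k = w_{k,1}/det W the coefficients of the Vandermonde matrix with nodes α_k² (α_m = 1), one has c_k ≤ 2^{m−1} (r/diam Ω)^{k²−k} for every k = 1,...,m. -/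
/-!
The matrix is the Vandermonde matrix of the nodes `v i = (x²)^(m - i)`, where
`x = r / (2 diam Ω) ≤ 1/2`. Deleting row `k` of a Vandermonde matrix divides its determinant by
`∏_{i ≠ k} |v k - v i|` up to sign, and deleting the first column of what remains pulls out
`∏_{i ≠ k} v i`; so `|c_k| = ∏_{i ≠ k} v i / |v k - v i|`. Consecutive nodes differ by the factor
`x² ≤ 1/4`, hence the factor of index `i` is at most `2` for `i > k` and `2 (x²)^(k - i)` for
`i < k`, and the exponents `2 (k - i)` sum to `k² + k`.
-/

open Finset

theorem Fin.prod_prod_Ioi_succAbove {M : Type*} [CommMonoid M] {n : ℕ}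
    (f : Fin (n + 1) → Fin (n + 1) → M) (hf : ∀ i j, f i j = f j i) (k : Fin (n + 1)) :
    ∏ i, ∏ j ∈ Ioi i, f i j =
      (∏ i, ∏ j ∈ Ioi i, f (k.succAbove i) (k.succAbove j)) * ∏ i, f (k.succAbove i) k := by
  have prod_Ioi {N : ℕ} (g : Fin N → Fin N → M) :
      ∏ i, ∏ j ∈ Ioi i, g i j = ∏ i, ∏ j, if i < j then g i j else 1 := by
    simp [← filter_lt_eq_Ioi, prod_filter]
  have pair (i : Fin n) : (if k.succAbove i < k then f (k.succAbove i) k else 1) *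
      (if k < k.succAbove i then f k (k.succAbove i) else 1) = f (k.succAbove i) k := by
    rcases (k.succAbove_ne i).lt_or_gt with h | h
    · simp [h, h.not_gt]
    · simp [h, h.not_gt, hf k]
  simp only [prod_Ioi, Fin.prod_univ_succAbove _ k, lt_irrefl, if_false, one_mul,
    Fin.succAbove_lt_succAbove_iff, prod_mul_distrib]
  rw [← prod_congr rfl fun i _ => pair i, prod_mul_distrib]
  ac_rfl

theorem Fin.sum_val_tsub_succAbove_mul_two {m : ℕ} (k : Fin (m + 1)) :
    (∑ i : Fin m, ((k : ℕ) - k.succAbove i)) * 2 = (k + 1) * k := by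
  have hk : (k : ℕ) + 1 ≤ m + 1 := k.is_lt
  have h : ∑ j ∈ range (m + 1), ((k : ℕ) - j) = ∑ j ∈ range (k + 1), ((k : ℕ) - j) :=
    (sum_subset (range_subset_range.2 hk) fun j _ hj => by simp at hj; omega).symm
  have hreflect : ∑ j ∈ range (k + 1), ((k : ℕ) - j) = ∑ j ∈ range (k + 1), j := by
    simpa using sum_range_reflect (fun j => j) (k + 1)
  have := Fin.sum_univ_succAbove (fun j : Fin (m + 1) => (k : ℕ) - j) k
  rw [Fin.sum_univ_eq_sum_range (fun j => (k : ℕ) - j), h, hreflect, tsub_self, zero_add] at this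
  rw [← this, sum_range_id_mul_two, add_tsub_cancel_right]

namespace Matrix

theorem abs_det_vandermonde_succAbove {R : Type*} [CommRing R] [LinearOrder R]
    [IsStrictOrderedRing R] {n : ℕ} (v : Fin (n + 1) → R) (k : Fin (n + 1)) :
    |(vandermonde v).det| =
      (∏ i, |v k - v (k.succAbove i)|) * |(vandermonde (v ∘ k.succAbove)).det| := by
  simp only [det_vandermonde, abs_prod]
  rw [mul_comm]
  exact Fin.prod_prod_Ioi_succAbove (fun i j => |v j - v i|) (fun _ _ => abs_sub_comm _ _) k

theorem abs_det_submatrix_succAbove_succ_div_det_vandermonde {K : Type*} [Field K]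
    [LinearOrder K] [IsStrictOrderedRing K] {n : ℕ} {v : Fin (n + 1) → K}
    (hv : Function.Injective v) (k : Fin (n + 1)) :
    |((vandermonde v).submatrix k.succAbove Fin.succ).det / (vandermonde v).det| =
      ∏ i, |v (k.succAbove i)| / |v k - v (k.succAbove i)| := by
  have hminor : (vandermonde v).submatrix k.succAbove Fin.succ =
      of fun i j => (v ∘ k.succAbove) i * vandermonde (v ∘ k.succAbove) i j := by
    ext i j
    simp [vandermonde_apply, pow_succ']
  have hne : (vandermonde (v ∘ k.succAbove)).det ≠ 0 :=
    det_vandermonde_ne_zero_iff.2 (hv.comp k.succAbove_right_injective)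
  rw [hminor, det_mul_column, abs_div, abs_mul, abs_det_vandermonde_succAbove v k, abs_prod,
    mul_div_mul_right _ _ (abs_ne_zero.2 hne), prod_div_distrib]
  rfl

end Matrix

section PowDiff

variable {K : Type*} [Field K] [LinearOrder K] [IsStrictOrderedRing K] {x : K}

theorem half_pow_le_pow_sub_pow (hx0 : 0 ≤ x) (hx : x ≤ 1 / 2) {a b : ℕ} (hab : a < b) :
    x ^ a / 2 ≤ x ^ a - x ^ b := by
  have hxb : x ^ (b - a) ≤ x ^ 1 := pow_le_pow_of_le_one hx0 (by linarith) (by omega)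
  have hpow : x ^ b = x ^ a * x ^ (b - a) := by rw [← pow_add, Nat.add_sub_cancel' hab.le]
  nlinarith [pow_nonneg hx0 a]

theorem pow_div_abs_sub_pow_le (hx0 : 0 < x) (hx : x ≤ 1 / 2) {p q : ℕ} (hpq : p ≠ q) :
    x ^ p / |x ^ q - x ^ p| ≤ 2 * x ^ (p - q) := by
  rcases hpq.lt_or_gt with h | h
  · have hhalf := half_pow_le_pow_sub_pow hx0.le hx h
    rw [abs_sub_comm, abs_of_pos (by linarith [pow_pos hx0 p]),
      div_le_iff₀ (by linarith [pow_pos hx0 p]), Nat.sub_eq_zero_of_le h.le, pow_zero]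
    linarith
  · have hhalf := half_pow_le_pow_sub_pow hx0.le hx h
    have hpow : x ^ p = x ^ (p - q) * x ^ q := by rw [← pow_add, Nat.sub_add_cancel h.le]
    rw [abs_of_pos (by linarith [pow_pos hx0 q]), div_le_iff₀ (by linarith [pow_pos hx0 q])]
    nlinarith [pow_pos hx0 (p - q)]

end PowDiff

theorem abs_det_submatrix_succAbove_succ_div_det_vandermonde_pow_le {K : Type*} [Field K]
    [LinearOrder K] [IsStrictOrderedRing K] {x : K} (hx0 : 0 < x) (hx : x ≤ 1 / 2) {m : ℕ}
    (k : Fin (m + 1)) :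
    let v : Fin (m + 1) → K := fun i => (x ^ 2) ^ (m - (i : ℕ))
    |((Matrix.vandermonde v).submatrix k.succAbove Fin.succ).det / (Matrix.vandermonde v).det| ≤
      2 ^ m * x ^ ((k : ℕ) ^ 2 + k) := by
  intro v
  have hy : x ^ 2 ≤ 1 / 2 := by nlinarith
  have hexp {i j : Fin (m + 1)} (hij : i ≠ j) : m - (i : ℕ) ≠ m - j := by
    have := i.is_le; have := j.is_le; have := Fin.val_ne_of_ne hij; omega
  have hv : Function.Injective v := fun i j h => by
    by_contra hij
    exact hexp hij (pow_right_injective₀ (by positivity) (by nlinarith) h)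
  have hfactor (i : Fin m) : |v (k.succAbove i)| / |v k - v (k.succAbove i)| ≤
      2 * (x ^ 2) ^ ((k : ℕ) - k.succAbove i) := by
    have : m - (k.succAbove i : ℕ) - (m - k) = k - k.succAbove i := by
      have := k.is_le; have := (k.succAbove i).is_le; omega
    rw [abs_of_pos (by positivity), ← this]
    exact pow_div_abs_sub_pow_le (by positivity) hy (hexp (k.succAbove_ne i))
  calc _ = ∏ i, |v (k.succAbove i)| / |v k - v (k.succAbove i)| :=
      Matrix.abs_det_submatrix_succAbove_succ_div_det_vandermonde hv k
    _ ≤ ∏ i : Fin m, 2 * (x ^ 2) ^ ((k : ℕ) - k.succAbove i) :=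
      prod_le_prod (fun i _ => by positivity) fun i _ => hfactor i
    _ = 2 ^ m * x ^ ((k : ℕ) ^ 2 + k) := by
      rw [prod_mul_distrib, prod_const, card_fin, prod_pow_eq_pow_sum, ← pow_mul,
        mul_comm 2, Fin.sum_val_tsub_succAbove_mul_two]
      ring_nf

/-- Rows and columns are indexed from `0` and the matrix has size `m + 1`, so the paper's
`k² - k` and `2^{m-1}` read `k² + k` and `2^m` here. -/
theorem coefficient_bound_general (n : ℕ) (Ω : Set (EuclideanSpace ℝ (Fin n)))
    (r : ℝ) (hr : 0 < r)
    (h2r : 2 * r ≤ Metric.diam Ω)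
    (m : ℕ) (k : Fin (m + 1)) :
    Matrix.det
        ((Matrix.of fun (i j : Fin (m + 1)) =>
            (r / (2 * Metric.diam Ω)) ^ (2 * (j : ℕ) * (m - (i : ℕ)))).submatrix
          k.succAbove Fin.succ) /
      Matrix.det
        (Matrix.of fun (i j : Fin (m + 1)) =>
          (r / (2 * Metric.diam Ω)) ^ (2 * (j : ℕ) * (m - (i : ℕ)))) ≤
      2 ^ m * (r / Metric.diam Ω) ^ ((k : ℕ) ^ 2 + (k : ℕ)) := by
  set d := Metric.diam Ω
  set x := r / (2 * d)
  have hd : 0 < d := by linarith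
  have hx0 : 0 < x := by positivity
  have hx : x ≤ 1 / 2 := by rw [div_le_iff₀ (by positivity)]; linarith
  have hxd : x ≤ r / d := div_le_div_of_nonneg_left hr.le (by positivity) (by linarith)
  have hW : (Matrix.of fun (i j : Fin (m + 1)) => x ^ (2 * (j : ℕ) * (m - (i : ℕ)))) =
      Matrix.vandermonde fun i => (x ^ 2) ^ (m - (i : ℕ)) := by
    ext i j
    simp only [Matrix.of_apply, Matrix.vandermonde_apply, ← pow_mul]
    ring_nf
  rw [hW]
  calc _ ≤ |_| := le_abs_self _
    _ ≤ 2 ^ m * x ^ ((k : ℕ) ^ 2 + k) :=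
      abs_det_submatrix_succAbove_succ_div_det_vandermonde_pow_le hx0 hx k
    _ ≤ 2 ^ m * (r / d) ^ ((k : ℕ) ^ 2 + k) := by gcongr

/-- Size of the matrix is `m + 1`, i.e. the paper's `m ≥ 2` corresponds to `m + 1` with
`1 ≤ m`. The nodes are `α_i² = x^{2(m - i₀)}` for `x = r / (2 diam Ω)` and the 0-based row
index `i₀`, and the paper's `k² - k` becomes `(k : ℕ)² + (k : ℕ)`, and `2^{m-1}` becomes
`2^m`. -/
theorem coefficient_bound (n : ℕ) (Ω : Set (EuclideanSpace ℝ (Fin n)))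
    (hΩopen : IsOpen Ω) (hΩbd : Bornology.IsBounded Ω)
    (x₀ : EuclideanSpace ℝ (Fin n)) (hx₀ : x₀ ∈ Ω)
    (r : ℝ) (hrdef : r = Metric.infDist x₀ (frontier Ω)) (hr : 0 < r)
    (h2r : 2 * r ≤ Metric.diam Ω)
    (m : ℕ) (hm : 1 ≤ m) (k : Fin (m + 1)) :
    Matrix.det
        ((Matrix.of fun (i j : Fin (m + 1)) =>
            (r / (2 * Metric.diam Ω)) ^ (2 * (j : ℕ) * (m - (i : ℕ)))).submatrix
          k.succAbove Fin.succ) /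
      Matrix.det
        (Matrix.of fun (i j : Fin (m + 1)) =>
          (r / (2 * Metric.diam Ω)) ^ (2 * (j : ℕ) * (m - (i : ℕ)))) ≤
      2 ^ m * (r / Metric.diam Ω) ^ ((k : ℕ) ^ 2 + (k : ℕ)) :=
  coefficient_bound_general n Ω r hr h2r m k
end
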